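/- Let V, W be finite-dimensional complex vector spaces and let u : V → W and c : W → V be linear maps such that the spectrum of c ∘ u is contained in Σ₁. Set y := ψ(c ∘ u) ∘ c, and let s : V → V be the unique linear map with spectrum contained in Σ₁ such that exp(2πi·s) = y ∘ u + Id_V. Then s = c ∘ u and ψ(s)^{−1} ∘ y = c. -/

import Mathlib

/-!
Since `ψ(X) * X = exp(2πi X) - 1`, the hypothesis on `s` says `exp(2πi s) = exp(2πi (c ∘ u))`.
Two facts about finite dimensions finish the proof: `ψ(X)` is invertible when no eigenvalue of `X`
is a nonzero integer, because on an eigenvector with eigenvalue `α` it acts by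
`(exp(2πi α) - 1) / α` (by `2πi` if `α = 0`); and `a ↦ exp(2πi a)` is injective on elements with
spectrum in `Σ₁`.

For the injectivity, let `L` and `R` be left multiplication by `a` and right multiplication by `b`.
They commute, so `exp(2πi L) - exp(2πi R) = exp(2πi R) * ψ(L - R) * (L - R)`, and evaluating at `1`
gives `exp(2πi a) - exp(2πi b) = exp(2πi R) (ψ(L - R) (a - b))`. A common eigenvector of `L - R`
and `L` shows that every eigenvalue of `L - R` is a difference of a point of the spectrum of `a` and
one of the spectrum of `b`; for points of `Σ₁` such a difference is never a nonzero integer, so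
`ψ(L - R)` is invertible and `a = b`.
-/

open Complex

noncomputable section

/-- The set Σ: complex numbers `α` with `-1 ≤ Re α ≤ 0`, `Im α ≥ 0` if `Re α = -1`,
and `Im α < 0` if `Re α = 0`. -/
def SigmaSet : Set ℂ :=
  {α : ℂ | -1 ≤ α.re ∧ α.re ≤ 0 ∧ (α.re = -1 → 0 ≤ α.im) ∧ (α.re = 0 → α.im < 0)}

/-- The set Σ₁ := Σ + 1. -/
def Sigma1 : Set ℂ := {α : ℂ | α - 1 ∈ SigmaSet}

/-- The constant `2πi`. -/
def twoPiI : ℂ := 2 * Real.pi * Complex.I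

/-- The exponential `exp(2πi·f)` of an endomorphism `f`. -/
def expEnd {E : Type*} [NormedAddCommGroup E] [NormedSpace ℂ E] (f : E →L[ℂ] E) :
    E →L[ℂ] E :=
  NormedSpace.exp (twoPiI • f)

/-- The power series `ψ(A) := ∑_{k=1}^∞ ((2πi)^k / k!) A^(k-1)`. It satisfies
`A·ψ(A) = ψ(A)·A = exp(2πi·A) − Id`. -/
def psiEnd {E : Type*} [NormedAddCommGroup E] [NormedSpace ℂ E] (A : E →L[ℂ] E) :
    E →L[ℂ] E :=
  ∑' k : ℕ, ((twoPiI ^ (k + 1) / (Nat.factorial (k + 1) : ℂ)) • A ^ k)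

lemma norm_twoPiI : ‖twoPiI‖ = 2 * Real.pi := by
  rw [twoPiI, norm_mul, norm_mul, Complex.norm_I, mul_one, Complex.norm_ofNat,
    Complex.norm_real, Real.norm_of_nonneg Real.pi_pos.le]

lemma twoPiI_ne_zero : twoPiI ≠ 0 := by
  simp [twoPiI, Real.pi_ne_zero, Complex.I_ne_zero]

lemma hasSum_exp_twoPiI_smul {𝔄 : Type*} [NormedRing 𝔄] [NormedAlgebra ℂ 𝔄] [CompleteSpace 𝔄]
    (a : 𝔄) :
    HasSum (fun k : ℕ => (twoPiI ^ k / (Nat.factorial k : ℂ)) • a ^ k)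
      (NormedSpace.exp (twoPiI • a)) := by
  simpa only [smul_pow, smul_smul, div_eq_inv_mul] using
    NormedSpace.exp_series_hasSum_exp' (𝕂 := ℂ) (twoPiI • a)

lemma Module.End.exists_hasEigenvector_of_commute {K V : Type*} [Field K] [IsAlgClosed K]
    [AddCommGroup V] [Module K V] [FiniteDimensional K V] {f g : Module.End K V}
    (hfg : Commute f g) {μ : K} (hμ : f.HasEigenvalue μ) :
    ∃ α v, f.HasEigenvector μ v ∧ g.HasEigenvector α v := by
  have hmaps : ∀ v ∈ f.eigenspace μ, g v ∈ f.eigenspace μ := fun v hv =>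
    Module.End.mapsTo_genEigenspace_of_comm hfg μ 1 hv
  have : Nontrivial (f.eigenspace μ) := Submodule.nontrivial_iff_ne_bot.mpr hμ
  obtain ⟨α, hα⟩ := Module.End.exists_eigenvalue (g.restrict hmaps)
  obtain ⟨⟨v, hv⟩, hαv⟩ := hα.exists_hasEigenvector
  have hv0 : v ≠ 0 := fun h => hαv.2 (Subtype.ext h)
  refine ⟨α, v, ⟨hv, hv0⟩, ?_, hv0⟩
  exact Module.End.mem_eigenspace_iff.mpr (congrArg Subtype.val hαv.apply_eq_smul)

lemma spectrum.mem_of_mul_eq_smul {R A : Type*} [CommSemiring R] [Ring A] [Algebra R A]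
    {a x : A} {r : R} (hx : x ≠ 0) (h : a * x = r • x) : r ∈ spectrum R a := fun hu =>
  hx (hu.mul_right_eq_zero.mp (by
    rw [sub_mul, Algebra.algebraMap_eq_smul_one, smul_one_mul, h, sub_self]))

lemma spectrum.mem_of_mul_eq_smul' {R A : Type*} [CommSemiring R] [Ring A] [Algebra R A]
    {a x : A} {r : R} (hx : x ≠ 0) (h : x * a = r • x) : r ∈ spectrum R a := fun hu =>
  hx (hu.mul_left_eq_zero.mp (by
    rw [mul_sub, Algebra.algebraMap_eq_smul_one, mul_smul_one, h, sub_self]))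

section Endomorphism

variable {E : Type*} [NormedAddCommGroup E] [NormedSpace ℂ E]

lemma ContinuousLinearMap.opNorm_pow_le (X : E →L[ℂ] E) : ∀ k : ℕ, ‖X ^ k‖ ≤ ‖X‖ ^ k
  | 0 => by rw [pow_zero, pow_zero]; exact ContinuousLinearMap.norm_id_le
  | k + 1 => norm_pow_le' X k.succ_pos

lemma ContinuousLinearMap.apply_eq_smul_of_hasSum_smul_pow {a : ℕ → ℂ} {X T : E →L[ℂ] E}
    (hT : HasSum (fun k => a k • X ^ k) T) {v : E} {α s : ℂ} (hv : X v = α • v)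
    (hs : HasSum (fun k => a k * α ^ k) s) : T v = s • v := by
  have hpow : ∀ k : ℕ, (X ^ k) v = α ^ k • v := by
    intro k
    induction k with
    | zero => simp
    | succ k ih => rw [pow_succ, mul_apply_eq_comp, hv, map_smul, ih, smul_smul, ← pow_succ']
  refine (hT.mapL (ContinuousLinearMap.apply ℂ E v)).unique ?_
  simpa only [apply_apply, smul_apply, hpow, smul_smul] using hs.smul_const v

lemma commute_psiEnd_self (X : E →L[ℂ] E) : Commute X (psiEnd X) :=
  Commute.tsum_right X fun k => ((Commute.refl X).pow_right k).smul_right _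

variable [CompleteSpace E]

lemma hasSum_expEnd (X : E →L[ℂ] E) :
    HasSum (fun k : ℕ => (twoPiI ^ k / (Nat.factorial k : ℂ)) • X ^ k) (expEnd X) :=
  hasSum_exp_twoPiI_smul X

lemma expEnd_add_of_commute {X Y : E →L[ℂ] E} (h : Commute X Y) :
    expEnd (X + Y) = expEnd X * expEnd Y := by
  let +nondep : NormedAlgebra ℚ (E →L[ℂ] E) := .restrictScalars ℚ ℂ _
  rw [expEnd, expEnd, expEnd, smul_add,
    NormedSpace.exp_add_of_commute ((h.smul_left _).smul_right _)]

lemma isUnit_expEnd (X : E →L[ℂ] E) : IsUnit (expEnd X) := by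
  let +nondep : NormedAlgebra ℚ (E →L[ℂ] E) := .restrictScalars ℚ ℂ _
  exact NormedSpace.isUnit_exp _

lemma hasSum_psiEnd (X : E →L[ℂ] E) :
    HasSum (fun k : ℕ => (twoPiI ^ (k + 1) / (Nat.factorial (k + 1) : ℂ)) • X ^ k)
      (psiEnd X) := by
  refine (Summable.of_norm_bounded
    ((Real.summable_pow_div_factorial (2 * Real.pi * ‖X‖)).mul_left (2 * Real.pi))
    fun k => ?_).hasSum
  calc ‖(twoPiI ^ (k + 1) / (Nat.factorial (k + 1) : ℂ)) • X ^ k‖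
      ≤ (2 * Real.pi) ^ (k + 1) / Nat.factorial (k + 1) * ‖X‖ ^ k := by
        rw [norm_smul, norm_div, norm_pow, norm_twoPiI, Complex.norm_natCast]
        gcongr
        exact X.opNorm_pow_le k
    _ ≤ (2 * Real.pi) ^ (k + 1) / Nat.factorial k * ‖X‖ ^ k := by
        gcongr
        exact k.le_succ
    _ = 2 * Real.pi * ((2 * Real.pi * ‖X‖) ^ k / Nat.factorial k) := by ring

lemma psiEnd_mul_self (X : E →L[ℂ] E) : psiEnd X * X = expEnd X - 1 := by
  have hshift := (hasSum_nat_add_iff' 1).mpr (hasSum_expEnd X)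
  simp only [Finset.range_one, Finset.sum_singleton, pow_zero, Nat.factorial_zero, Nat.cast_one,
    div_one, one_smul] at hshift
  refine ((hasSum_psiEnd X).mul_right X).unique ?_
  simpa only [smul_mul_assoc, ← pow_succ] using hshift

lemma psiEnd_apply_ne_zero {X : E →L[ℂ] E} {v : E} {α : ℂ} (hv : v ≠ 0)
    (hXv : X v = α • v) (hα : ∀ n : ℤ, n ≠ 0 → α ≠ n) : psiEnd X v ≠ 0 := by
  intro hψ
  have hexp : expEnd X v = Complex.exp (twoPiI * α) • v := by
    refine X.apply_eq_smul_of_hasSum_smul_pow (hasSum_expEnd X) hXv ?_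
    simpa [Complex.exp_eq_exp_ℂ, mul_pow, mul_comm, mul_left_comm, div_eq_mul_inv]
      using hasSum_exp_twoPiI_smul α
  have hfix : expEnd X v = v := by
    have h := congr($(psiEnd_mul_self X) v)
    rw [mul_apply_eq_comp, hXv, map_smul, hψ, smul_zero, sub_apply, one_apply_eq_self] at h
    exact sub_eq_zero.mp h.symm
  obtain ⟨n, hn⟩ : ∃ n : ℤ, twoPiI * α = n * (2 * Real.pi * Complex.I) :=
    Complex.exp_eq_one_iff.mp (smul_left_injective ℂ hv (by simpa [hexp] using hfix))
  have hαn : α = n := mul_left_cancel₀ twoPiI_ne_zero (by rw [hn, twoPiI]; ring)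
  obtain rfl | hn0 := eq_or_ne n 0
  · have hψ0 : psiEnd X v = twoPiI • v := by
      refine X.apply_eq_smul_of_hasSum_smul_pow (hasSum_psiEnd X) hXv ?_
      simpa [hαn] using hasSum_single (f := fun k : ℕ =>
        twoPiI ^ (k + 1) / (Nat.factorial (k + 1) : ℂ) * (0 : ℂ) ^ k) 0 (fun k hk => by simp [hk])
    exact smul_ne_zero twoPiI_ne_zero hv (hψ0 ▸ hψ)
  · exact hα n hn0 hαn

end Endomorphism

lemma isUnit_psiEnd {E : Type*} [NormedAddCommGroup E] [NormedSpace ℂ E] [FiniteDimensional ℂ E]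
    {X : E →L[ℂ] E} (hX : ∀ n : ℤ, n ≠ 0 → ¬ Module.End.HasEigenvalue (X : E →ₗ[ℂ] E) n) :
    IsUnit (psiEnd X) := by
  by_contra hψ
  have h0 : Module.End.HasEigenvalue (psiEnd X : E →ₗ[ℂ] E) 0 := by
    rw [Module.End.hasEigenvalue_iff_mem_spectrum, ← ContinuousLinearMap.spectrum_eq]
    exact spectrum.zero_mem ℂ hψ
  have hcomm : Commute (psiEnd X : E →ₗ[ℂ] E) (X : E →ₗ[ℂ] E) :=
    LinearMap.ext fun v => congr($((commute_psiEnd_self X).eq.symm) v)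
  obtain ⟨α, v, hψv, hXv⟩ := Module.End.exists_hasEigenvector_of_commute hcomm h0
  refine psiEnd_apply_ne_zero hψv.2 hXv.apply_eq_smul (fun n hn hαn => hX n hn ?_)
    (by simpa using hψv.apply_eq_smul)
  exact hαn ▸ Module.End.hasEigenvalue_of_hasEigenvector hXv

lemma mem_sigma1_iff {α : ℂ} :
    α ∈ Sigma1 ↔ 0 ≤ α.re ∧ α.re ≤ 1 ∧ (α.re = 0 → 0 ≤ α.im) ∧ (α.re = 1 → α.im < 0) := by
  change -1 ≤ (α - 1).re ∧ _ ↔ _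
  simp only [Complex.sub_re, Complex.one_re, Complex.sub_im, Complex.one_im, sub_zero,
    sub_eq_neg_self, sub_eq_zero, neg_le_sub_iff_le_add, sub_nonpos]
  norm_num

lemma zero_mem_sigma1 : (0 : ℂ) ∈ Sigma1 := by
  norm_num [mem_sigma1_iff]

lemma sub_ne_intCast_of_mem_sigma1 {α β : ℂ} (hα : α ∈ Sigma1) (hβ : β ∈ Sigma1) {n : ℤ}
    (hn : n ≠ 0) : α - β ≠ n := by
  intro h
  have hre : α.re - β.re = n := by simpa using congrArg Complex.re h
  have him : α.im = β.im := by simpa [sub_eq_zero] using congrArg Complex.im h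
  obtain ⟨hα0, hα1, hα0im, hα1im⟩ := mem_sigma1_iff.mp hα
  obtain ⟨hβ0, hβ1, hβ0im, hβ1im⟩ := mem_sigma1_iff.mp hβ
  have hn' : n = 1 ∨ n = -1 := by
    have : (-1 : ℝ) ≤ n ∧ (n : ℝ) ≤ 1 := ⟨by linarith, by linarith⟩
    have : -1 ≤ n ∧ n ≤ 1 := by exact_mod_cast this
    omega
  rcases hn' with rfl | rfl
  · linarith [hα1im (by push_cast at hre; linarith), hβ0im (by push_cast at hre; linarith)]
  · linarith [hβ1im (by push_cast at hre; linarith), hα0im (by push_cast at hre; linarith)]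

lemma intCast_notMem_sigma1 {n : ℤ} (hn : n ≠ 0) : (n : ℂ) ∉ Sigma1 := fun h =>
  sub_ne_intCast_of_mem_sigma1 h zero_mem_sigma1 hn (sub_zero _)

lemma isUnit_psiEnd_of_spectrum_subset_sigma1 {E : Type*} [NormedAddCommGroup E]
    [NormedSpace ℂ E] [FiniteDimensional ℂ E] {X : E →L[ℂ] E} (hX : spectrum ℂ X ⊆ Sigma1) :
    IsUnit (psiEnd X) :=
  isUnit_psiEnd fun n hn hev =>
    intCast_notMem_sigma1 hn (hX (by rw [ContinuousLinearMap.spectrum_eq]; exact hev.mem_spectrum))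

section MulLeftRight

variable {𝔄 : Type*} [NormedRing 𝔄] [NormedAlgebra ℂ 𝔄]

open ContinuousLinearMap

lemma expEnd_apply_eq_of_pow_apply {E : Type*} [NormedAddCommGroup E] [NormedSpace ℂ E]
    [CompleteSpace E] [CompleteSpace 𝔄] {X : E →L[ℂ] E} {x : E} (φ : 𝔄 →L[ℂ] E) {a : 𝔄}
    (h : ∀ k : ℕ, (X ^ k) x = φ (a ^ k)) : expEnd X x = φ (NormedSpace.exp (twoPiI • a)) := by
  refine ((hasSum_expEnd X).mapL (apply ℂ E x)).unique ?_
  simpa only [apply_apply, smul_apply, h, map_smul] using (hasSum_exp_twoPiI_smul a).mapL φ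

lemma commute_mul_flip_mul (a b : 𝔄) : Commute (mul ℂ 𝔄 a) ((mul ℂ 𝔄).flip b) :=
  ext fun x => (mul_assoc a x b).symm

lemma expEnd_mul_apply [CompleteSpace 𝔄] (a x : 𝔄) :
    expEnd (mul ℂ 𝔄 a) x = NormedSpace.exp (twoPiI • a) * x := by
  refine expEnd_apply_eq_of_pow_apply ((mul ℂ 𝔄).flip x) fun k => ?_
  induction k with
  | zero => simp
  | succ k ih => rw [pow_succ', mul_apply_eq_comp, ih, flip_apply, mul_apply', flip_apply,
      mul_apply', mul_apply', ← mul_assoc, ← pow_succ']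

lemma expEnd_flip_mul_apply [CompleteSpace 𝔄] (b x : 𝔄) :
    expEnd ((mul ℂ 𝔄).flip b) x = x * NormedSpace.exp (twoPiI • b) := by
  refine expEnd_apply_eq_of_pow_apply (mul ℂ 𝔄 x) fun k => ?_
  induction k with
  | zero => simp
  | succ k ih => rw [pow_succ', mul_apply_eq_comp, ih, flip_apply, mul_apply', mul_apply',
      mul_apply', mul_assoc, ← pow_succ]

lemma exists_sub_eq_of_hasEigenvalue_mul_sub_flip_mul [FiniteDimensional ℂ 𝔄] {a b : 𝔄} {μ : ℂ}
    (hμ : Module.End.HasEigenvalue ((mul ℂ 𝔄 a - (mul ℂ 𝔄).flip b : 𝔄 →L[ℂ] 𝔄) : 𝔄 →ₗ[ℂ] 𝔄) μ) :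
    ∃ α ∈ spectrum ℂ a, ∃ β ∈ spectrum ℂ b, α - β = μ := by
  have hcomm : Commute ((mul ℂ 𝔄 a - (mul ℂ 𝔄).flip b : 𝔄 →L[ℂ] 𝔄) : 𝔄 →ₗ[ℂ] 𝔄)
      (mul ℂ 𝔄 a : 𝔄 →ₗ[ℂ] 𝔄) :=
    LinearMap.ext fun x => by simp [mul_sub, sub_mul, mul_assoc]
  obtain ⟨α, y, hDy, hLy⟩ := Module.End.exists_hasEigenvector_of_commute hcomm hμ
  have hay : a * y = α • y := by simpa using hLy.apply_eq_smul
  have hyb : y * b = (α - μ) • y := by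
    have hD : a * y - y * b = μ • y := by simpa using hDy.apply_eq_smul
    rw [sub_smul, ← hay, ← hD, sub_sub_cancel]
  exact ⟨α, spectrum.mem_of_mul_eq_smul hLy.2 hay, α - μ,
    spectrum.mem_of_mul_eq_smul' hLy.2 hyb, sub_sub_cancel α μ⟩

theorem exp_twoPiI_smul_injOn_sigma1 [FiniteDimensional ℂ 𝔄] :
    Set.InjOn (fun a : 𝔄 => NormedSpace.exp (twoPiI • a)) {a | spectrum ℂ a ⊆ Sigma1} := by
  intro a ha b hb hab
  set L := mul ℂ 𝔄 a
  set R := (mul ℂ 𝔄).flip b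
  have hRD : Commute R (L - R) := (commute_mul_flip_mul a b).symm.sub_right (Commute.refl R)
  have hψ : IsUnit (psiEnd (L - R)) := isUnit_psiEnd fun n hn hev => by
    obtain ⟨α, hα, β, hβ, hαβ⟩ := exists_sub_eq_of_hasEigenvalue_mul_sub_flip_mul hev
    exact sub_ne_intCast_of_mem_sigma1 (ha hα) (hb hβ) hn hαβ
  have hinj := (isUnit_iff_bijective.mp ((isUnit_expEnd R).mul hψ)).injective
  refine sub_eq_zero.mp ((injective_iff_map_eq_zero _).mp hinj _ ?_)
  calc (expEnd R * psiEnd (L - R)) (a - b) = (expEnd R * (psiEnd (L - R) * (L - R))) 1 := by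
        simp [L, R]
    _ = expEnd L 1 - expEnd R 1 := by
        rw [psiEnd_mul_self, mul_sub, mul_one, ← expEnd_add_of_commute hRD, add_sub_cancel]
        rfl
    _ = 0 := by
        rw [expEnd_mul_apply, expEnd_flip_mul_apply]
        simpa [sub_eq_zero] using hab

end MulLeftRight

theorem s_eq_cu_and_recover_c_general
    {V W : Type*} [NormedAddCommGroup V] [NormedSpace ℂ V] [FiniteDimensional ℂ V]
    [NormedAddCommGroup W] [NormedSpace ℂ W]
    (u : V →L[ℂ] W) (c : W →L[ℂ] V)
    (hcu : spectrum ℂ (c.comp u) ⊆ Sigma1)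
    (s : V →L[ℂ] V) (hs : spectrum ℂ s ⊆ Sigma1)
    (hes : expEnd s = ((psiEnd (c.comp u)).comp c).comp u + ContinuousLinearMap.id ℂ V) :
    s = c.comp u ∧
    (Ring.inverse (psiEnd s)).comp ((psiEnd (c.comp u)).comp c) = c := by
  have hexp : expEnd s = expEnd (c.comp u) := by
    rw [hes, ← sub_add_cancel (expEnd (c.comp u)) 1, ← psiEnd_mul_self]
    rfl
  obtain rfl : s = c.comp u := exp_twoPiI_smul_injOn_sigma1 hs hcu hexp
  refine ⟨rfl, ?_⟩
  rw [← ContinuousLinearMap.comp_assoc, ← ContinuousLinearMap.mul_def,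
    Ring.inverse_mul_cancel _ (isUnit_psiEnd_of_spectrum_subset_sigma1 hcu)]
  rfl

/-- Let the spectrum of `c∘u` be contained in Σ₁, set `y := ψ(c∘u) ∘ c`, and let `s` be the
unique endomorphism with spectrum in Σ₁ and `exp(2πi·s) = y∘u + Id`. Then `s = c∘u` and
`ψ(s)⁻¹ ∘ y = c`. -/
theorem s_eq_cu_and_recover_c
    {V W : Type*} [NormedAddCommGroup V] [NormedSpace ℂ V] [FiniteDimensional ℂ V]
    [NormedAddCommGroup W] [NormedSpace ℂ W] [FiniteDimensional ℂ W]
    (u : V →L[ℂ] W) (c : W →L[ℂ] V)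
    (hcu : spectrum ℂ (c.comp u) ⊆ Sigma1)
    (s : V →L[ℂ] V) (hs : spectrum ℂ s ⊆ Sigma1)
    (hes : expEnd s = ((psiEnd (c.comp u)).comp c).comp u + ContinuousLinearMap.id ℂ V) :
    s = c.comp u ∧
    (Ring.inverse (psiEnd s)).comp ((psiEnd (c.comp u)).comp c) = c :=
  s_eq_cu_and_recover_c_general u c hcu s hs hes
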